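/- arXiv:2407.15662 — 13 statements merged into one kernel-verified Lean document; each statement's English description precedes it below -/
import Mathlib

section
/- For every k, k' ∈ 𝒦 and every x ∈ 𝒳, the point x* := σ_{k'}^{-1}(σ_k(x)) belongs to I_{k,x,k'} (indeed p_k(x) lies in both c^k_x and c^{k'}_{x*}); consequently p_k(x) ∈ ⋃_{x' ∈ I_{k,x,k'}} c^{k'}_{x'} for every k', and hence p_k(x) ∈ ⋂_{k' ∈ 𝒦} ⋃_{x' ∈ I_{k,x,k'}} c^{k'}_{x'}. (Soundness of the plausible-matching refinement: the refined confidence set of Algorithm 2 still contains the true value under the validity event.) -/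
/-- Soundness of the plausible-matching refinement: for permutation-equivalent
distributions `p k = q ∘ σ k` with valid confidence sets `c k x`, the point
`x* = (σ k')⁻¹ (σ k x)` is a plausible matching of `x` for `k'` (indeed `p k x`
lies in both `c k x` and `c k' x*`); consequently
`p k x ∈ ⋃ x' ∈ I k x k', c k' x'` for every `k'`, and hence
`p k x ∈ ⋂ k', ⋃ x' ∈ I k x k', c k' x'`. -/
theorem soundness_plausible_matchings
    {𝒳 𝒦 : Type*} [Fintype 𝒳] [Fintype 𝒦]
    (q : 𝒳 → ℝ) (hq_nonneg : ∀ x, 0 ≤ q x) (hq_sum : ∑ x, q x = 1)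
    (σ : 𝒦 → Equiv.Perm 𝒳)
    (p : 𝒦 → 𝒳 → ℝ) (hp : ∀ k x, p k x = q (σ k x))
    (c : 𝒦 → 𝒳 → Set ℝ)
    (hvalid : ∀ k x, p k x ∈ c k x)
    (I : 𝒦 → 𝒳 → 𝒦 → Set 𝒳)
    (hI : ∀ k x k', I k x k' = {x' : 𝒳 | (c k x ∩ c k' x').Nonempty}) :
    (∀ k k' x, (σ k').symm (σ k x) ∈ I k x k' ∧
        p k x ∈ c k x ∧ p k x ∈ c k' ((σ k').symm (σ k x)) ∧
        p k x ∈ ⋃ x' ∈ I k x k', c k' x') ∧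
      (∀ k x, p k x ∈ ⋂ k' : 𝒦, ⋃ x' ∈ I k x k', c k' x') := by
  have key : ∀ k k' x, p k x ∈ c k' ((σ k').symm (σ k x)) := by
    intro k k' x
    have : p k x = p k' ((σ k').symm (σ k x)) := by
      rw [hp, hp, Equiv.apply_symm_apply]
    rw [this]; exact hvalid _ _
  have main : ∀ k k' x, (σ k').symm (σ k x) ∈ I k x k' ∧
      p k x ∈ c k x ∧ p k x ∈ c k' ((σ k').symm (σ k x)) ∧
      p k x ∈ ⋃ x' ∈ I k x k', c k' x' := by
    intro k k' x
    have hmem : (σ k').symm (σ k x) ∈ I k x k' := by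
      rw [hI]; exact ⟨p k x, hvalid k x, key k k' x⟩
    exact ⟨hmem, hvalid k x, key k k' x,
      Set.mem_biUnion hmem (key k k' x)⟩
  refine ⟨main, fun k x => Set.mem_iInter.2 fun k' => (main k k' x).2.2.2⟩
end

section
/- (Theorem 1, core identification step.) Fix k ∈ 𝒦 and x ∈ 𝒳 with p_k(x) > 0, and let k' ∈ 𝒦, k' ≠ k, be such that for every x₁ ∈ 𝒳 with x₁ ≠ x one has |p_k(x) − p_k(x₁)|/2 > B(p_k(x), n_k) + B(p_k(x₁), n_{k'}). Then I_{k,x,k'} = {σ_{k'}^{-1}(σ_k(x))}; in particular |I_{k,x,k'}| = 1, so k' belongs to the set K_{k,x} := {k} ∪ {k'' ∈ 𝒦 \ {k} : |I_{k,x,k''}| = 1} used by Algorithm 2 to pool samples. -/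
/-- Theorem 1, core identification step: if `p k x > 0` and the gap condition
holds between `(k, x)` and `k'`, then the plausible-matching set `I k x k'` is
exactly the singleton `{(σ k')⁻¹ (σ k x)}`; in particular it has one element,
so `k'` belongs to the set `K_{k,x}` used by Algorithm 2 to pool samples. -/
theorem identification_step_positive_mass
    {𝒳 𝒦 : Type*} [Fintype 𝒳] [Fintype 𝒦]
    (q : 𝒳 → ℝ) (hq_nonneg : ∀ x, 0 ≤ q x) (hq_sum : ∑ x, q x = 1)
    (σ : 𝒦 → Equiv.Perm 𝒳)
    (p : 𝒦 → 𝒳 → ℝ) (hp : ∀ k x, p k x = q (σ k x))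
    (c : 𝒦 → 𝒳 → Set ℝ)
    (hvalid : ∀ k x, p k x ∈ c k x)
    (I : 𝒦 → 𝒳 → 𝒦 → Set 𝒳)
    (hI : ∀ k x k', I k x k' = {x' : 𝒳 | (c k x ∩ c k' x').Nonempty})
    (n : 𝒦 → ℕ) (hn : ∀ k, 0 < n k)
    (phat : 𝒦 → 𝒳 → ℝ)
    (B : ℝ → ℕ → ℝ) (hB_nonneg : ∀ r m, 0 ≤ B r m)
    (hsurr : ∀ k x, c k x ⊆ {lam : ℝ | |phat k x - lam| ≤ B (p k x) (n k)})
    (k k' : 𝒦) (x : 𝒳) (hk' : k' ≠ k)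
    (hpos : 0 < p k x)
    (hgap : ∀ x₁ : 𝒳, x₁ ≠ x →
      |p k x - p k x₁| / 2 > B (p k x) (n k) + B (p k x₁) (n k')) :
    I k x k' = {(σ k').symm (σ k x)} ∧
      k' ∈ ({k} ∪ {k'' : 𝒦 | k'' ≠ k ∧ (I k x k'').ncard = 1} : Set 𝒦) := by
  have hmain : I k x k' = {(σ k').symm (σ k x)} := by
    rw [hI]
    ext x'
    simp only [Set.mem_setOf_eq, Set.mem_singleton_iff]
    constructor
    · rintro ⟨lam, hl1, hl2⟩
      have h1 := hsurr k x hl1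
      have h2 := hsurr k' x' hl2
      have h3 := hsurr k x (hvalid k x)
      have h4 := hsurr k' x' (hvalid k' x')
      simp only [Set.mem_setOf_eq] at h1 h2 h3 h4
      set x₁ : 𝒳 := (σ k).symm (σ k' x') with hx₁
      have hpe : p k x₁ = p k' x' := by
        rw [hp, hp, hx₁, Equiv.apply_symm_apply]
      by_contra hne
      have hx₁x : x₁ ≠ x := by
        intro h
        apply hne
        rw [hx₁] at h
        have : σ k' x' = σ k x := by
          have := congrArg (σ k) h
          simpa using this
        simp [← this]
      have hgap' := hgap x₁ hx₁x
      rw [hpe] at hgap'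
      have : |p k x - p k' x'| ≤ 2 * (B (p k x) (n k) + B (p k' x') (n k')) := by
        have e1 : |p k x - lam| ≤ 2 * B (p k x) (n k) := by
          calc |p k x - lam| = |(lam - phat k x) + (phat k x - p k x)| := by ring_nf; rw [abs_sub_comm]; ring_nf
            _ ≤ |lam - phat k x| + |phat k x - p k x| := abs_add_le _ _
            _ ≤ B (p k x) (n k) + B (p k x) (n k) := by
                rw [abs_sub_comm]; exact add_le_add h1 h3
            _ = 2 * B (p k x) (n k) := by ring
        have e2 : |lam - p k' x'| ≤ 2 * B (p k' x') (n k') := by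
          calc |lam - p k' x'| = |(lam - phat k' x') + (phat k' x' - p k' x')| := by ring_nf
            _ ≤ |lam - phat k' x'| + |phat k' x' - p k' x'| := abs_add_le _ _
            _ ≤ B (p k' x') (n k') + B (p k' x') (n k') := by
                rw [abs_sub_comm]; exact add_le_add h2 h4
            _ = 2 * B (p k' x') (n k') := by ring
        calc |p k x - p k' x'| = |(p k x - lam) + (lam - p k' x')| := by ring_nf
          _ ≤ |p k x - lam| + |lam - p k' x'| := abs_add_le _ _
          _ ≤ 2 * B (p k x) (n k) + 2 * B (p k' x') (n k') := add_le_add e1 e2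
          _ = 2 * (B (p k x) (n k) + B (p k' x') (n k')) := by ring
      linarith
    · intro h
      subst h
      refine ⟨p k x, hvalid k x, ?_⟩
      have : p k' ((σ k').symm (σ k x)) = p k x := by
        rw [hp, hp, Equiv.apply_symm_apply]
      rw [← this]
      exact hvalid k' _
  refine ⟨hmain, Or.inr ⟨hk', ?_⟩⟩
  rw [hmain, Set.ncard_singleton]
end

section
/- (Theorem 2, core step: points outside the support only match points outside the support.) Fix k, k' ∈ 𝒦 with k' ≠ k, and fix x ∈ 𝒳 with p_k(x) = 0. Assume the gap condition: for every x₁ ∈ 𝒳 with p_k(x₁) > 0, p_k(x₁) > 2·(B(0, n_k) + B(p_k(x₁), n_{k'})). Then every x' ∈ I_{k,x,k'} satisfies p_{k'}(x') = 0, i.e., I_{k,x,k'} is contained in the complement of the support of p_{k'}. -/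
/-- Theorem 2, core step: under the gap condition, points outside the support
of `p k` can only be matched (for `k'`) to points outside the support of
`p k'`. -/
theorem outside_support_matches_outside_support
    {𝒳 𝒦 : Type*} [Fintype 𝒳] [Fintype 𝒦]
    (q : 𝒳 → ℝ) (hq_nonneg : ∀ x, 0 ≤ q x) (hq_sum : ∑ x, q x = 1)
    (σ : 𝒦 → Equiv.Perm 𝒳)
    (p : 𝒦 → 𝒳 → ℝ) (hp : ∀ k x, p k x = q (σ k x))
    (c : 𝒦 → 𝒳 → Set ℝ)
    (hvalid : ∀ k x, p k x ∈ c k x)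
    (I : 𝒦 → 𝒳 → 𝒦 → Set 𝒳)
    (hI : ∀ k x k', I k x k' = {x' : 𝒳 | (c k x ∩ c k' x').Nonempty})
    (n : 𝒦 → ℕ) (hn : ∀ k, 0 < n k)
    (phat : 𝒦 → 𝒳 → ℝ)
    (B : ℝ → ℕ → ℝ) (hB_nonneg : ∀ r m, 0 ≤ B r m)
    (hsurr : ∀ k x, c k x ⊆ {lam : ℝ | |phat k x - lam| ≤ B (p k x) (n k)})
    (hzero : ∀ k x, p k x = 0 → phat k x = 0)
    (k k' : 𝒦) (hk' : k' ≠ k) (x : 𝒳) (hx : p k x = 0)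
    (hgap : ∀ x₁ : 𝒳, 0 < p k x₁ →
      p k x₁ > 2 * (B 0 (n k) + B (p k x₁) (n k'))) :
    ∀ x' ∈ I k x k', p k' x' = 0 := by
  intro x' hx'
  rw [hI] at hx'
  obtain ⟨lam, hlam1, hlam2⟩ := hx'
  -- bounds from surrogate containment
  have h1 : |phat k x - lam| ≤ B (p k x) (n k) := hsurr k x hlam1
  have h2 : |phat k' x' - lam| ≤ B (p k' x') (n k') := hsurr k' x' hlam2
  have h3 : |phat k' x' - p k' x'| ≤ B (p k' x') (n k') :=
    hsurr k' x' (hvalid k' x')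
  have hz : phat k x = 0 := hzero k x hx
  rw [hz, hx] at h1
  -- |lam| ≤ B 0 (n k)
  have hlamb : |lam| ≤ B 0 (n k) := by rwa [zero_sub, abs_neg] at h1
  by_contra hne
  have hpos : 0 < p k' x' := lt_of_le_of_ne (by rw [hp]; exact hq_nonneg _) (Ne.symm hne)
  -- find x₁ with p k x₁ = p k' x'
  set x₁ : 𝒳 := (σ k).symm (σ k' x') with hx₁
  have heq : p k x₁ = p k' x' := by
    rw [hp, hp, hx₁, Equiv.apply_symm_apply]
  have hgap' := hgap x₁ (by rw [heq]; exact hpos)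
  rw [heq] at hgap'
  -- p k' x' ≤ |lam| + 2 B(p k' x', n k')
  have htri : p k' x' ≤ |lam| + 2 * B (p k' x') (n k') := by
    have : |p k' x' - lam| ≤ 2 * B (p k' x') (n k') := by
      calc |p k' x' - lam| = |(p k' x' - phat k' x') + (phat k' x' - lam)| := by ring_nf
        _ ≤ |p k' x' - phat k' x'| + |phat k' x' - lam| := abs_add_le _ _
        _ ≤ B (p k' x') (n k') + B (p k' x') (n k') := by
            rw [abs_sub_comm]; exact add_le_add h3 h2
        _ = 2 * B (p k' x') (n k') := by ring
    have h := abs_le.mp this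
    have := h.2
    linarith [le_abs_self lam]
  nlinarith [hB_nonneg 0 (n k), hB_nonneg (p k' x') (n k')]
end

section
/- (Theorem 2, conclusion in the case of more than one point outside the support.) Fix k ∈ 𝒦 and x ∈ 𝒳 with p_k(x) = 0. Define K̄_k := {k} ∪ {k' ∈ 𝒦 \ {k} : for every x₁ ∈ 𝒳 with p_k(x₁) > 0, p_k(x₁) > 2·(B(0, n_k) + B(p_k(x₁), n_{k'}))}. Assume moreover that n ↦ B(0, n) is nonincreasing. Then c^k_x ∩ ⋂_{k' ∈ K̄_k \ {k}} ⋃_{x' ∈ I_{k,x,k'}} c^{k'}_{x'} ⊆ {λ ∈ ℝ : λ ≤ B(0, max_{k' ∈ K̄_k} n_{k'})}; in particular the refined confidence set of Algorithm 2 at (k, x) is contained in {λ : λ ≤ B(p_k(x), max_{k' ∈ K̄_k} n_{k'})}. -/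
/-- Theorem 2, conclusion in the case of more than one point outside the
support: for `x` outside the support of `p k`, the refined confidence set of
Algorithm 2 at `(k, x)` is contained in `{λ : λ ≤ B 0 (max_{k' ∈ K̄_k} n k')}`
(note `B (p k x) = B 0` here since `p k x = 0`). -/
theorem refined_set_outside_support_many
    {𝒳 𝒦 : Type*} [Fintype 𝒳] [Fintype 𝒦]
    (q : 𝒳 → ℝ) (hq_nonneg : ∀ x, 0 ≤ q x) (hq_sum : ∑ x, q x = 1)
    (σ : 𝒦 → Equiv.Perm 𝒳)
    (p : 𝒦 → 𝒳 → ℝ) (hp : ∀ k x, p k x = q (σ k x))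
    (c : 𝒦 → 𝒳 → Set ℝ)
    (hvalid : ∀ k x, p k x ∈ c k x)
    (I : 𝒦 → 𝒳 → 𝒦 → Set 𝒳)
    (hI : ∀ k x k', I k x k' = {x' : 𝒳 | (c k x ∩ c k' x').Nonempty})
    (n : 𝒦 → ℕ) (hn : ∀ k, 0 < n k)
    (phat : 𝒦 → 𝒳 → ℝ)
    (B : ℝ → ℕ → ℝ) (hB_nonneg : ∀ r m, 0 ≤ B r m)
    (hB_mono : ∀ m m' : ℕ, m ≤ m' → B 0 m' ≤ B 0 m)
    (hsurr : ∀ k x, c k x ⊆ {lam : ℝ | |phat k x - lam| ≤ B (p k x) (n k)})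
    (hzero : ∀ k x, p k x = 0 → phat k x = 0)
    (k : 𝒦) (x : 𝒳) (hx : p k x = 0)
    (Kbar : Set 𝒦)
    (hKbar : Kbar = insert k {k' : 𝒦 | k' ≠ k ∧ ∀ x₁ : 𝒳, 0 < p k x₁ →
      p k x₁ > 2 * (B 0 (n k) + B (p k x₁) (n k'))}) :
    (c k x ∩ ⋂ k' ∈ Kbar \ {k}, ⋃ x' ∈ I k x k', c k' x')
        ⊆ {lam : ℝ | lam ≤ B 0 (sSup (n '' Kbar))} ∧
      (c k x ∩ ⋂ k' ∈ Kbar \ {k}, ⋃ x' ∈ I k x k', c k' x')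
        ⊆ {lam : ℝ | lam ≤ B (p k x) (sSup (n '' Kbar))} := by
  have key : (c k x ∩ ⋂ k' ∈ Kbar \ {k}, ⋃ x' ∈ I k x k', c k' x')
      ⊆ {lam : ℝ | lam ≤ B 0 (sSup (n '' Kbar))} := by
    intro lam hlam
    obtain ⟨hcx, hinter⟩ := hlam
    have hkK : k ∈ Kbar := by rw [hKbar]; exact Set.mem_insert _ _
    have hne : (n '' Kbar).Nonempty := ⟨n k, k, hkK, rfl⟩
    have hmem : sSup (n '' Kbar) ∈ n '' Kbar := hne.csSup_mem (Set.toFinite _)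
    obtain ⟨kst, hkstK, hkst⟩ := hmem
    by_cases hkk : kst = k
    · -- max achieved at k itself
      have h1 := hsurr k x hcx
      simp only [Set.mem_setOf_eq, hx] at h1
      have hph : phat k x = 0 := hzero k x hx
      rw [hph] at h1
      have h2 := abs_le.mp h1
      have h3 : lam ≤ B 0 (n k) := by linarith [h2.1]
      rw [← hkst, hkk]
      exact h3
    · have hkst' : kst ∈ Kbar \ {k} := ⟨hkstK, hkk⟩
      simp only [Set.mem_iInter] at hinter
      have hU := hinter kst hkst'
      simp only [Set.mem_iUnion] at hU
      obtain ⟨x', hx'I, hlamc⟩ := hU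
      rw [hI] at hx'I
      obtain ⟨μ, hμ1, hμ2⟩ := hx'I
      -- bounds on μ
      have hph : phat k x = 0 := hzero k x hx
      have hμb : |μ| ≤ B 0 (n k) := by
        have := hsurr k x hμ1
        simp only [Set.mem_setOf_eq, hx, hph] at this
        simpa using this
      have hvb := hsurr kst x' (hvalid kst x')
      simp only [Set.mem_setOf_eq] at hvb
      have hμb2 := hsurr kst x' hμ2
      simp only [Set.mem_setOf_eq] at hμb2
      -- p kst x' = 0
      have h0 : p kst x' = 0 := by
        by_contra h0
        have hpos : 0 < p kst x' := lt_of_le_of_ne (by rw [hp]; exact hq_nonneg _) (Ne.symm h0)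
        set x₁ := (σ k).symm (σ kst x') with hx₁
        have hpx₁ : p k x₁ = p kst x' := by
          rw [hp, hp, hx₁, Equiv.apply_symm_apply]
        have hkstmem : kst ∈ {k' : 𝒦 | k' ≠ k ∧ ∀ x₁ : 𝒳, 0 < p k x₁ →
            p k x₁ > 2 * (B 0 (n k) + B (p k x₁) (n k'))} := by
          rw [hKbar] at hkstK
          rcases hkstK with h | h
          · exact absurd h hkk
          · exact h
        have hbig := hkstmem.2 x₁ (hpx₁ ▸ hpos)
        rw [hpx₁] at hbig
        have ha := abs_le.mp hμb
        have hb := abs_le.mp hvb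
        have hc := abs_le.mp hμb2
        linarith [ha.1, ha.2, hb.1, hb.2, hc.1, hc.2]
      -- conclude
      have hph' : phat kst x' = 0 := hzero kst x' h0
      have hl := hsurr kst x' hlamc
      simp only [Set.mem_setOf_eq, h0, hph'] at hl
      have h2 := abs_le.mp hl
      simp only [Set.mem_setOf_eq]
      rw [← hkst]
      linarith [h2.1]
  exact ⟨key, by rw [hx]; exact key⟩
end

section
/- (Theorem 2, case of exactly one point outside the support.) Assume there is exactly one x₀ ∈ 𝒳 with q(x₀) = 0. Fix k ∈ 𝒦 and x ∈ 𝒳 with p_k(x) = 0 (so σ_k(x) = x₀), and let k' ∈ 𝒦, k' ≠ k, satisfy the gap condition: for every x₁ ∈ 𝒳 with p_k(x₁) > 0, p_k(x₁) > 2·(B(0, n_k) + B(p_k(x₁), n_{k'})). Then I_{k,x,k'} = {σ_{k'}^{-1}(x₀)}, a singleton; in particular K̄_k := {k} ∪ {k'' ≠ k : the gap condition holds for k''} is contained in K_{k,x} := {k} ∪ {k'' ≠ k : |I_{k,x,k''}| = 1}. -/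
lemma singleton_matching_aux
    {𝒳 𝒦 : Type*} [Fintype 𝒳]
    (q : 𝒳 → ℝ) (hq_nonneg : ∀ x, 0 ≤ q x)
    (σ : 𝒦 → Equiv.Perm 𝒳)
    (p : 𝒦 → 𝒳 → ℝ) (hp : ∀ k x, p k x = q (σ k x))
    (c : 𝒦 → 𝒳 → Set ℝ)
    (hvalid : ∀ k x, p k x ∈ c k x)
    (I : 𝒦 → 𝒳 → 𝒦 → Set 𝒳)
    (hI : ∀ k x k', I k x k' = {x' : 𝒳 | (c k x ∩ c k' x').Nonempty})
    (n : 𝒦 → ℕ)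
    (phat : 𝒦 → 𝒳 → ℝ)
    (B : ℝ → ℕ → ℝ) (hB_nonneg : ∀ r m, 0 ≤ B r m)
    (hsurr : ∀ k x, c k x ⊆ {lam : ℝ | |phat k x - lam| ≤ B (p k x) (n k)})
    (hzero : ∀ k x, p k x = 0 → phat k x = 0)
    (x₀ : 𝒳) (hx₀ : q x₀ = 0) (hx₀uniq : ∀ y : 𝒳, q y = 0 → y = x₀)
    (k k' : 𝒦) (x : 𝒳) (hx : p k x = 0)
    (hgap : ∀ x₁ : 𝒳, 0 < p k x₁ →
      p k x₁ > 2 * (B 0 (n k) + B (p k x₁) (n k'))) :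
    I k x k' = {(σ k').symm x₀} := by
  rw [hI]
  ext x'
  simp only [Set.mem_setOf_eq, Set.mem_singleton_iff]
  constructor
  · rintro ⟨lam, hl1, hl2⟩
    by_contra hne
    -- σ k' x' ≠ x₀, so p k' x' > 0
    have hσ : σ k' x' ≠ x₀ := fun h => hne (by rw [← h]; simp)
    have hqpos : 0 < q (σ k' x') := by
      rcases lt_or_eq_of_le (hq_nonneg (σ k' x')) with h | h
      · exact h
      · exact absurd (hx₀uniq _ h.symm) hσ
    set r : ℝ := p k' x' with hr
    have hrq : r = q (σ k' x') := hp k' x'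
    have hrpos : 0 < r := hrq ▸ hqpos
    -- x₁ with p k x₁ = r
    have hx₁ : p k ((σ k).symm (σ k' x')) = r := by
      rw [hp]; simp [hrq]
    have hgap' : r > 2 * (B 0 (n k) + B r (n k')) := by
      have := hgap _ (hx₁ ▸ hrpos)
      rwa [hx₁] at this
    -- bounds
    have h1 : |phat k x - lam| ≤ B 0 (n k) := by
      have := hsurr k x hl1
      simpa [hx] using this
    have hph : phat k x = 0 := hzero k x hx
    rw [hph, zero_sub, abs_neg] at h1
    have h2 : |phat k' x' - lam| ≤ B r (n k') := hsurr k' x' hl2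
    have h3 : |phat k' x' - r| ≤ B r (n k') := hsurr k' x' (hvalid k' x')
    have a1 := abs_le.mp h1
    have a2 := abs_le.mp h2
    have a3 := abs_le.mp h3
    linarith [a1.1, a1.2, a2.1, a2.2, a3.1, a3.2]
  · rintro rfl
    refine ⟨0, ?_, ?_⟩
    · have := hvalid k x; rwa [hx] at this
    · have hpz : p k' ((σ k').symm x₀) = 0 := by rw [hp]; simp [hx₀]
      have := hvalid k' ((σ k').symm x₀); rwa [hpz] at this

/-- Theorem 2, case of exactly one point outside the support: if `x₀` is the
unique point with `q x₀ = 0`, `p k x = 0` and the gap condition holds for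
`k' ≠ k`, then `I k x k'` is the singleton `{(σ k')⁻¹ x₀}`; in particular
`K̄_k ⊆ K_{k,x}`. -/
theorem singleton_matching_unique_zero
    {𝒳 𝒦 : Type*} [Fintype 𝒳] [Fintype 𝒦]
    (q : 𝒳 → ℝ) (hq_nonneg : ∀ x, 0 ≤ q x) (hq_sum : ∑ x, q x = 1)
    (σ : 𝒦 → Equiv.Perm 𝒳)
    (p : 𝒦 → 𝒳 → ℝ) (hp : ∀ k x, p k x = q (σ k x))
    (c : 𝒦 → 𝒳 → Set ℝ)
    (hvalid : ∀ k x, p k x ∈ c k x)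
    (I : 𝒦 → 𝒳 → 𝒦 → Set 𝒳)
    (hI : ∀ k x k', I k x k' = {x' : 𝒳 | (c k x ∩ c k' x').Nonempty})
    (n : 𝒦 → ℕ) (hn : ∀ k, 0 < n k)
    (phat : 𝒦 → 𝒳 → ℝ)
    (B : ℝ → ℕ → ℝ) (hB_nonneg : ∀ r m, 0 ≤ B r m)
    (hsurr : ∀ k x, c k x ⊆ {lam : ℝ | |phat k x - lam| ≤ B (p k x) (n k)})
    (hzero : ∀ k x, p k x = 0 → phat k x = 0)
    (x₀ : 𝒳) (hx₀ : q x₀ = 0) (hx₀uniq : ∀ y : 𝒳, q y = 0 → y = x₀)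
    (k k' : 𝒦) (x : 𝒳) (hx : p k x = 0) (hk' : k' ≠ k)
    (hgap : ∀ x₁ : 𝒳, 0 < p k x₁ →
      p k x₁ > 2 * (B 0 (n k) + B (p k x₁) (n k'))) :
    I k x k' = {(σ k').symm x₀} ∧
      (insert k {k'' : 𝒦 | k'' ≠ k ∧ ∀ x₁ : 𝒳, 0 < p k x₁ →
          p k x₁ > 2 * (B 0 (n k) + B (p k x₁) (n k''))} : Set 𝒦)
        ⊆ insert k {k'' : 𝒦 | k'' ≠ k ∧ (I k x k'').ncard = 1} := by
  constructor
  · exact singleton_matching_aux q hq_nonneg σ p hp c hvalid I hI n phat B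
      hB_nonneg hsurr hzero x₀ hx₀ hx₀uniq k k' x hx hgap
  · rintro k'' (rfl | ⟨hne, hgap''⟩)
    · exact Set.mem_insert _ _
    · refine Set.mem_insert_of_mem _ ⟨hne, ?_⟩
      rw [singleton_matching_aux q hq_nonneg σ p hp c hvalid I hI n phat B
        hB_nonneg hsurr hzero x₀ hx₀ hx₀uniq k k'' x hx hgap'']
      simp
end

section
/- (Lemma: surrogate for Bernstein confidence intervals, deterministic form.) Let u, λ, p ∈ [0,1] and ζ > 0. If |u − λ| ≤ √(2·λ·(1−λ)·ζ) + ζ/3 and |u − p| ≤ √(2·p·(1−p)·ζ) + ζ/3, then |u − λ| ≤ √(2·p·(1−p)·ζ) + 4.8·ζ. -/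
/-- Surrogate for Bernstein confidence intervals, deterministic form: if `λ`
lies in the Bernstein confidence interval around the empirical mean `u`, and
the Bernstein interval is valid for the true parameter `p`, then `λ` lies in
the surrogate interval of deterministic width `√(2p(1−p)ζ) + 4.8ζ`. -/
theorem bernstein_surrogate
    (u lam p ζ : ℝ)
    (hu : u ∈ Set.Icc (0:ℝ) 1) (hlam : lam ∈ Set.Icc (0:ℝ) 1)
    (hp : p ∈ Set.Icc (0:ℝ) 1) (hζ : 0 < ζ)
    (h1 : |u - lam| ≤ Real.sqrt (2 * lam * (1 - lam) * ζ) + ζ / 3)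
    (h2 : |u - p| ≤ Real.sqrt (2 * p * (1 - p) * ζ) + ζ / 3) :
    |u - lam| ≤ Real.sqrt (2 * p * (1 - p) * ζ) + 4.8 * ζ := by
  obtain ⟨hp0, hp1⟩ := hp
  obtain ⟨hl0, hl1⟩ := hlam
  set a := Real.sqrt (2 * p * (1 - p) * ζ) with ha_def
  have hX : (0:ℝ) ≤ 2 * p * (1 - p) * ζ :=
    mul_nonneg (mul_nonneg (by linarith) (by linarith)) hζ.le
  have hY : (0:ℝ) ≤ 2 * lam * (1 - lam) * ζ :=
    mul_nonneg (mul_nonneg (by linarith) (by linarith)) hζ.le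
  have ha0 : 0 ≤ a := Real.sqrt_nonneg _
  have ha2 : a ^ 2 = 2 * p * (1 - p) * ζ := Real.sq_sqrt hX
  set D := |u - lam| with hD_def
  set E := |u - p| with hE_def
  have hD0 : 0 ≤ D := abs_nonneg _
  have hE0 : 0 ≤ E := abs_nonneg _
  have htri : |lam - p| ≤ D + E := by
    calc |lam - p| = |(lam - u) + (u - p)| := by ring_nf
    _ ≤ |lam - u| + |u - p| := abs_add_le _ _
    _ = D + E := by rw [abs_sub_comm lam u]
  have habs1 : lam - p ≤ |lam - p| := le_abs_self _
  have habs2 : p - lam ≤ |lam - p| := by rw [abs_sub_comm]; exact le_abs_self _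
  have hvar : lam * (1 - lam) ≤ p * (1 - p) + (D + E) := by
    rcases le_total lam p with h | h
    · nlinarith
    · nlinarith
  by_cases hcase : D ≤ ζ / 3
  · linarith
  · push_neg at hcase
    have hsq : (D - ζ / 3) ^ 2 ≤ 2 * lam * (1 - lam) * ζ := by
      have h1' : D - ζ / 3 ≤ Real.sqrt (2 * lam * (1 - lam) * ζ) := by linarith
      have hs2 := Real.sq_sqrt hY
      have hs0 := Real.sqrt_nonneg (2 * lam * (1 - lam) * ζ)
      nlinarith
    have hE' : E ≤ a + ζ / 3 := h2
    -- multiply hvar by 2ζ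
    have hmul : lam * (1 - lam) * ζ ≤ (p * (1 - p) + (D + E)) * ζ :=
      mul_le_mul_of_nonneg_right hvar hζ.le
    -- multiply hE' by ζ
    have hmul2 : ζ * E ≤ ζ * (a + ζ / 3) :=
      mul_le_mul_of_nonneg_left hE' hζ.le
    have hkey : D ^ 2 ≤ a ^ 2 + 2 * ζ * a + (8/3) * (ζ * D) + (5/9) * ζ ^ 2 := by
      nlinarith [hsq, hmul, hmul2, ha2]
    by_contra hgt
    push_neg at hgt
    have hDpos : 0 < D := lt_of_le_of_lt (by linarith) hgt
    have p1 : a * (a + 4.8 * ζ) ≤ a * D := mul_le_mul_of_nonneg_left hgt.le ha0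
    have p2 : D * (a + 4.8 * ζ) < D * D := mul_lt_mul_of_pos_left hgt hDpos
    have p3 : ζ * (a + 4.8 * ζ) < ζ * D := mul_lt_mul_of_pos_left hgt hζ
    have hza : 0 ≤ ζ * a := mul_nonneg hζ.le ha0
    linarith [p1, p2, p3, hkey, hza, mul_pos hζ hζ]
end

section
/- (Inequality (i) in the proof of the Bernstein-surrogate lemma.) Let u, λ ∈ [0,1] and ζ ≥ 0. If |u − λ| ≤ √(2·λ·(1−λ)·ζ) + ζ/3, then √(λ·(1−λ)) ≤ √(u·(1−u)) + 2.4·√ζ. -/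
/-! The map `x ↦ x (1 - x)` is 1-Lipschitz on `[0, 1]`, so with `a = √(λ(1-λ))`,
`b = √(u(1-u))` and `s = √ζ` the hypothesis gives the quadratic inequality
`a² ≤ b² + 2 a s + s²/3`. Any `k ≥ 1` with `k² ≥ 2k + 1/3` then yields `a ≤ b + k s`;
`k = 2.4` is such a constant. -/

lemma mul_one_sub_le_add_abs_sub {x y : ℝ} (hx : x ∈ Set.Icc (0:ℝ) 1)
    (hy : y ∈ Set.Icc (0:ℝ) 1) : y * (1 - y) ≤ x * (1 - x) + |x - y| := by
  obtain ⟨hx0, hx1⟩ := hx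
  obtain ⟨hy0, hy1⟩ := hy
  -- `y(1-y) - x(1-x) = (x - y)(x + y - 1)` and `|x + y - 1| ≤ 1`
  rcases abs_cases (x - y) with ⟨h, _⟩ | ⟨h, _⟩ <;> nlinarith

lemma sqrt_two_mul_mul_le {x y : ℝ} (hx : 0 ≤ x) (hy : 0 ≤ y) :
    √(2 * x * y) ≤ 2 * √x * √y := by
  rw [Real.sqrt_le_left (by positivity), mul_pow, mul_pow, Real.sq_sqrt hx, Real.sq_sqrt hy]
  nlinarith [mul_nonneg hx hy]

lemma le_add_mul_of_sq_le_sq_add {a b s p q k : ℝ} (hb : 0 ≤ b) (hs : 0 ≤ s)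
    (hpk : p ≤ 2 * k) (hk : p * k + q ≤ k ^ 2) (h : a ^ 2 ≤ b ^ 2 + p * a * s + q * s ^ 2) :
    a ≤ b + k * s := by
  by_contra! hlt
  -- `t ↦ t² - p t s` is increasing for `t ≥ p s / 2`, and `b + k s` is such a point
  have hroot : b ^ 2 ≤ (b + k * s) ^ 2 - p * (b + k * s) * s - q * s ^ 2 := by
    nlinarith [mul_nonneg (mul_nonneg hb hs) (sub_nonneg.2 hpk),
      mul_nonneg (sq_nonneg s) (sub_nonneg.2 hk)]
  have hmono : 0 < (a - (b + k * s)) * (a + (b + k * s) - p * s) := by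
    apply mul_pos (sub_pos.2 hlt)
    nlinarith [mul_nonneg hs (sub_nonneg.2 hpk)]
  nlinarith

/-- Inequality (i) in the proof of the Bernstein-surrogate lemma. -/
theorem bernstein_surrogate_ineq_i
    (u lam ζ : ℝ)
    (hu : u ∈ Set.Icc (0:ℝ) 1) (hlam : lam ∈ Set.Icc (0:ℝ) 1) (hζ : 0 ≤ ζ)
    (h : |u - lam| ≤ Real.sqrt (2 * lam * (1 - lam) * ζ) + ζ / 3) :
    Real.sqrt (lam * (1 - lam)) ≤ Real.sqrt (u * (1 - u)) + 2.4 * Real.sqrt ζ := by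
  have hvar_nonneg : ∀ x ∈ Set.Icc (0:ℝ) 1, 0 ≤ x * (1 - x) := fun x hx =>
    mul_nonneg hx.1 (sub_nonneg.2 hx.2)
  have hcross : √(2 * lam * (1 - lam) * ζ) ≤ 2 * √(lam * (1 - lam)) * √ζ := by
    rw [mul_assoc 2 lam]
    exact sqrt_two_mul_mul_le (hvar_nonneg lam hlam) hζ
  refine le_add_mul_of_sq_le_sq_add (p := 2) (q := 1 / 3) (Real.sqrt_nonneg _)
    (Real.sqrt_nonneg _) (by norm_num) (by norm_num) ?_
  rw [Real.sq_sqrt (hvar_nonneg lam hlam), Real.sq_sqrt (hvar_nonneg u hu), Real.sq_sqrt hζ]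
  linarith [mul_one_sub_le_add_abs_sub hu hlam]
end

section
/- (Inequality (ii) in the proof of the Bernstein-surrogate lemma.) Let u, λ ∈ [0,1] and ζ ≥ 0. If |u − λ| ≤ √(2·λ·(1−λ)·ζ) + ζ/3, then √(u·(1−u)) ≤ √(λ·(1−λ)) + √(ζ/2). -/
/-- Inequality (ii) in the proof of the Bernstein-surrogate lemma. -/
theorem bernstein_surrogate_ineq_ii
    (u lam ζ : ℝ)
    (hu : u ∈ Set.Icc (0:ℝ) 1) (hlam : lam ∈ Set.Icc (0:ℝ) 1) (hζ : 0 ≤ ζ)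
    (h : |u - lam| ≤ Real.sqrt (2 * lam * (1 - lam) * ζ) + ζ / 3) :
    Real.sqrt (u * (1 - u)) ≤ Real.sqrt (lam * (1 - lam)) + Real.sqrt (ζ / 2) := by
  obtain ⟨hu0, hu1⟩ := hu
  obtain ⟨hl0, hl1⟩ := hlam
  set A := Real.sqrt (lam * (1 - lam)) with hA
  set B := Real.sqrt (ζ / 2) with hB
  have hAnn : 0 ≤ A := Real.sqrt_nonneg _
  have hBnn : 0 ≤ B := Real.sqrt_nonneg _
  have hA2 : A ^ 2 = lam * (1 - lam) :=
    Real.sq_sqrt (mul_nonneg hl0 (by linarith))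
  have hB2 : B ^ 2 = ζ / 2 := Real.sq_sqrt (by linarith)
  have hAB : Real.sqrt (2 * lam * (1 - lam) * ζ) = 2 * A * B := by
    have : 2 * lam * (1 - lam) * ζ = (2 * A * B) ^ 2 := by
      have := hA2; have := hB2; nlinarith
    rw [this, Real.sqrt_sq (by positivity)]
  rw [hAB] at h
  have habs := abs_le.mp h
  have key : u * (1 - u) ≤ (A + B) ^ 2 := by nlinarith [habs.1, habs.2]
  calc Real.sqrt (u * (1 - u)) ≤ Real.sqrt ((A + B) ^ 2) := Real.sqrt_le_sqrt key
    _ = A + B := Real.sqrt_sq (by positivity)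
end

section
/- (Lemma: surrogate for empirical-Bernstein confidence intervals, deterministic form.) Let u, λ, p ∈ [0,1] and ζ > 0. If |u − λ| ≤ √(2·u·(1−u)·ζ) + (7/3)·ζ and |u − p| ≤ √(2·p·(1−p)·ζ) + ζ/3, then |u − λ| ≤ √(2·p·(1−p)·ζ) + (10/3)·ζ. -/
/-- Surrogate for empirical-Bernstein confidence intervals, deterministic
form: if `λ` lies in the empirical-Bernstein confidence interval around the
empirical mean `u` (whose empirical variance is `u(1−u)`), and the Bernstein
inequality holds for the sample, then `λ` lies in the surrogate interval of
deterministic width `√(2p(1−p)ζ) + (10/3)ζ`. -/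
theorem empirical_bernstein_surrogate
    (u lam p ζ : ℝ)
    (hu : u ∈ Set.Icc (0:ℝ) 1) (hlam : lam ∈ Set.Icc (0:ℝ) 1)
    (hp : p ∈ Set.Icc (0:ℝ) 1) (hζ : 0 < ζ)
    (h1 : |u - lam| ≤ Real.sqrt (2 * u * (1 - u) * ζ) + (7/3) * ζ)
    (h2 : |u - p| ≤ Real.sqrt (2 * p * (1 - p) * ζ) + ζ / 3) :
    |u - lam| ≤ Real.sqrt (2 * p * (1 - p) * ζ) + (10/3) * ζ := by
  obtain ⟨hu0, hu1⟩ := hu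
  obtain ⟨hp0, hp1⟩ := hp
  set s := Real.sqrt (2 * p * (1 - p) * ζ) with hs
  have hs0 : 0 ≤ s := Real.sqrt_nonneg _
  have hs2 : s ^ 2 = 2 * p * (1 - p) * ζ := by
    rw [hs, Real.sq_sqrt (by nlinarith [hζ.le, mul_nonneg hp0 (by linarith : (0:ℝ) ≤ 1-p)])]
  have hvar : u * (1 - u) ≤ p * (1 - p) + |u - p| := by
    rcases abs_cases (u - p) with ⟨h, _⟩ | ⟨h, _⟩ <;> nlinarith
  have key : Real.sqrt (2 * u * (1 - u) * ζ) ≤ s + ζ := by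
    rw [show s + ζ = Real.sqrt ((s + ζ) ^ 2) by
      rw [Real.sqrt_sq (by positivity)]]
    apply Real.sqrt_le_sqrt
    nlinarith [h2, hs2, hζ.le]
  calc |u - lam| ≤ Real.sqrt (2 * u * (1 - u) * ζ) + (7/3) * ζ := h1
    _ ≤ (s + ζ) + (7/3) * ζ := by linarith
    _ = s + (10/3) * ζ := by ring
end

section
/- (Sub-Gaussianity of Bernoulli random variables, Kearns–Saul inequality.) For every μ ∈ (0,1) with μ ≠ 1/2 and every λ ∈ ℝ, μ·exp(λ·(1−μ)) + (1−μ)·exp(−λ·μ) ≤ exp((λ²/2)·g(μ)), where g(μ) := (1/2 − μ)/log(1/μ − 1). Equivalently, if X is a Bernoulli random variable with mean μ, then log E[exp(λ·(X − μ))] ≤ (λ²/2)·g(μ) for all λ ∈ ℝ. -/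
/-!
Write `C(t) = log (1 - μ + μ eᵗ) - μ t`, `L = log (1/μ - 1)` and `g = (1/2 - μ) / L`. For `μ < 1/2`
the gap `F(t) = g t²/2 - C(t)` satisfies `F(0) = 0` and `F'(t) = g t + μ - σ(t - L)`, where `σ` is
the logistic sigmoid. As `σ` is convex on `(-∞, 0]`, `F'` is concave on `(-∞, L]`; it vanishes at
`0` and at `L`, so `F' ≤ 0` on `(-∞, 0]` and `F' ≥ 0` on `[0, L]`, whence `F ≥ 0` on `(-∞, L]`.
Exponential tilting by `L` turns `μ` into `1/2`, which gives `C(2L - t) = C(t) + (1 - 2μ)(L - t)`: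
`F` is symmetric about `L`, covering `t > L`. Finally `C_{1-μ}(-t) = C_μ(t)` reduces `μ > 1/2`
to `μ < 1/2`.
-/

open Real Set

lemma Real.convexOn_sigmoid_Iic : ConvexOn ℝ (Iic 0) sigmoid := by
  refine MonotoneOn.convexOn_of_deriv (convex_Iic 0) continuous_sigmoid.continuousOn
    differentiable_sigmoid.differentiableOn ?_
  rw [interior_Iic, deriv_sigmoid]
  intro x _ y hy hxy
  have hσxy : sigmoid x ≤ sigmoid y := sigmoid_le hxy
  have hσy : sigmoid y < 1 / 2 := by simpa [sigmoid_zero] using sigmoid_lt (mem_Iio.1 hy)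
  nlinarith

lemma ConcaveOn.nonpos_of_le_of_eq_zero {s : Set ℝ} {f : ℝ → ℝ} (hf : ConcaveOn ℝ s f)
    {a b x : ℝ} (hx : x ∈ s) (hb : b ∈ s) (hab : a < b) (hfa : f a = 0) (hfb : f b = 0)
    (hxa : x ≤ a) : f x ≤ 0 := by
  rcases hxa.eq_or_lt with rfl | hxa
  · exact hfa.le
  have := hf.slope_anti_adjacent hx hb hxa hab
  rw [hfa, hfb, sub_self, zero_div, le_div_iff₀ (sub_pos.2 hxa)] at this
  linarith

lemma ConcaveOn.nonneg_of_mem_Icc {s : Set ℝ} {f : ℝ → ℝ} (hf : ConcaveOn ℝ s f)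
    {a b x : ℝ} (ha : a ∈ s) (hb : b ∈ s) (hfa : f a = 0) (hfb : f b = 0) (hx : x ∈ Icc a b) :
    0 ≤ f x := by
  simpa [hfa, hfb] using hf.ge_on_segment ha hb (segment_eq_Icc (hx.1.trans hx.2) ▸ hx)

lemma nonneg_of_hasDerivAt_of_concaveOn {f f' : ℝ → ℝ} {a b x : ℝ}
    (hf : ∀ x, HasDerivAt f (f' x) x) (hf' : ConcaveOn ℝ (Iic b) f') (hab : a < b)
    (hfa : f a = 0) (hf'a : f' a = 0) (hf'b : f' b = 0) (hxb : x ≤ b) : 0 ≤ f x := by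
  have hcont : Continuous f := continuous_iff_continuousAt.2 fun x ↦ (hf x).continuousAt
  rcases le_total x a with hxa | hax
  · have hanti : AntitoneOn f (Iic a) :=
      antitoneOn_of_hasDerivWithinAt_nonpos (convex_Iic a) hcont.continuousOn
        (fun y _ ↦ (hf y).hasDerivWithinAt) fun y hy ↦
          have hya : y ≤ a := mem_Iic.1 (interior_subset hy)
          hf'.nonpos_of_le_of_eq_zero (hya.trans hab.le) self_mem_Iic hab hf'a hf'b hya
    exact hfa ▸ hanti hxa self_mem_Iic hxa
  · have hmono : MonotoneOn f (Icc a b) :=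
      monotoneOn_of_hasDerivWithinAt_nonneg (convex_Icc a b) hcont.continuousOn
        (fun y _ ↦ (hf y).hasDerivWithinAt) fun y hy ↦
          hf'.nonneg_of_mem_Icc hab.le self_mem_Iic hf'a hf'b (interior_subset hy)
    exact hfa ▸ hmono (left_mem_Icc.2 hab.le) ⟨hax, hxb⟩ hax

noncomputable def centeredBernoulliCGF (μ t : ℝ) : ℝ := log (1 - μ + μ * exp t) - μ * t

section
variable {μ : ℝ}

lemma one_div_sub_one_pos (h0 : 0 < μ) (h1 : μ < 1) : 0 < 1 / μ - 1 := by
  rw [sub_pos, lt_div_iff₀ h0]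
  linarith

lemma log_one_div_sub_one_pos (h0 : 0 < μ) (hμ : μ < 1 / 2) : 0 < log (1 / μ - 1) :=
  log_pos (by rw [lt_sub_iff_add_lt, lt_div_iff₀ h0]; linarith)

lemma one_sub_add_mul_exp_pos (h0 : 0 ≤ μ) (h1 : μ ≤ 1) (t : ℝ) : 0 < 1 - μ + μ * exp t := by
  rcases h0.eq_or_lt with rfl | h0
  · norm_num
  · nlinarith [exp_pos t]

lemma exp_centeredBernoulliCGF (h0 : 0 ≤ μ) (h1 : μ ≤ 1) (t : ℝ) :
    exp (centeredBernoulliCGF μ t) = μ * exp (t * (1 - μ)) + (1 - μ) * exp (-t * μ) := by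
  rw [centeredBernoulliCGF, exp_sub, exp_log (one_sub_add_mul_exp_pos h0 h1 t),
    mul_sub, mul_one, exp_sub, neg_mul, exp_neg, mul_comm t μ]
  field_simp
  ring

@[simp] lemma centeredBernoulliCGF_zero : centeredBernoulliCGF μ 0 = 0 := by
  simp [centeredBernoulliCGF]

lemma sigmoid_sub_log_one_div_sub_one (h0 : 0 < μ) (h1 : μ < 1) (t : ℝ) :
    sigmoid (t - log (1 / μ - 1)) = μ * exp t / (1 - μ + μ * exp t) := by
  rw [sigmoid_def, neg_sub, exp_sub, exp_log (one_div_sub_one_pos h0 h1)]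
  field_simp
  ring

lemma hasDerivAt_centeredBernoulliCGF (h0 : 0 < μ) (h1 : μ < 1) (t : ℝ) :
    HasDerivAt (centeredBernoulliCGF μ) (sigmoid (t - log (1 / μ - 1)) - μ) t := by
  rw [sigmoid_sub_log_one_div_sub_one h0 h1]
  have hlog := (((hasDerivAt_exp t).const_mul μ).const_add (1 - μ)).log
    (one_sub_add_mul_exp_pos h0.le h1.le t).ne'
  exact (hlog.sub ((hasDerivAt_id t).const_mul μ)).congr_deriv (by simp)

lemma centeredBernoulliCGF_two_mul_sub (h0 : 0 < μ) (h1 : μ < 1) (t : ℝ) :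
    centeredBernoulliCGF μ (2 * log (1 / μ - 1) - t)
      = centeredBernoulliCGF μ t + (1 - 2 * μ) * (log (1 / μ - 1) - t) := by
  have hodds := one_div_sub_one_pos h0 h1
  have hpos := one_sub_add_mul_exp_pos h0.le h1.le t
  have hfactor : 1 - μ + μ * exp (2 * log (1 / μ - 1) - t)
      = (1 / μ - 1) * exp (-t) * (1 - μ + μ * exp t) := by
    rw [exp_sub, two_mul, exp_add, exp_log hodds, exp_neg]
    field_simp
    ring
  rw [centeredBernoulliCGF, centeredBernoulliCGF, hfactor,
    log_mul (by positivity) hpos.ne', log_mul hodds.ne' (exp_pos _).ne', log_exp]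
  ring

lemma centeredBernoulliCGF_one_sub_neg (h0 : 0 ≤ μ) (h1 : μ ≤ 1) (t : ℝ) :
    centeredBernoulliCGF (1 - μ) (-t) = centeredBernoulliCGF μ t := by
  have hfactor : 1 - (1 - μ) + (1 - μ) * exp (-t) = exp (-t) * (1 - μ + μ * exp t) := by
    rw [exp_neg]
    field_simp
    ring
  rw [centeredBernoulliCGF, centeredBernoulliCGF, hfactor,
    log_mul (exp_pos _).ne' (one_sub_add_mul_exp_pos h0 h1 t).ne', log_exp]
  ring

lemma centeredBernoulliCGF_le_of_le_log {t : ℝ} (h0 : 0 < μ) (hμ : μ < 1 / 2)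
    (ht : t ≤ log (1 / μ - 1)) :
    centeredBernoulliCGF μ t ≤ t ^ 2 / 2 * ((1 / 2 - μ) / log (1 / μ - 1)) := by
  set L := log (1 / μ - 1)
  set g := (1 / 2 - μ) / L
  have h1 : μ < 1 := by linarith
  have hL : 0 < L := log_one_div_sub_one_pos h0 hμ
  have hconvex : ConvexOn ℝ (Iic L) fun s ↦ sigmoid (s - L) := by
    convert convexOn_sigmoid_Iic.translate_left (-L) using 1 <;> ext s <;> simp [sub_eq_add_neg]
  have hconcave : ConcaveOn ℝ (Iic L) fun s ↦ s * g + μ - sigmoid (s - L) :=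
    (((LinearMap.mulRight ℝ g).concaveOn (convex_Iic L)).add_const μ).sub hconvex
  have hderiv (s : ℝ) : HasDerivAt (fun s ↦ s ^ 2 / 2 * g - centeredBernoulliCGF μ s)
      (s * g + μ - sigmoid (s - L)) s := by
    refine ((((hasDerivAt_pow 2 s).div_const 2).mul_const g).sub
      (hasDerivAt_centeredBernoulliCGF h0 h1 s)).congr_deriv ?_
    ring
  have hzero : 0 * g + μ - sigmoid (0 - L) = 0 := by
    rw [zero_mul, zero_add, sigmoid_sub_log_one_div_sub_one h0 h1 0]
    simp
  have hL' : L * g + μ - sigmoid (L - L) = 0 := by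
    rw [sub_self, sigmoid_zero, mul_div_cancel₀ _ hL.ne']
    ring
  have := nonneg_of_hasDerivAt_of_concaveOn hderiv hconcave hL (by simp) hzero hL' ht
  linarith

lemma centeredBernoulliCGF_le_of_lt_half (h0 : 0 < μ) (hμ : μ < 1 / 2) (t : ℝ) :
    centeredBernoulliCGF μ t ≤ t ^ 2 / 2 * ((1 / 2 - μ) / log (1 / μ - 1)) := by
  set L := log (1 / μ - 1)
  rcases le_total t L with ht | ht
  · exact centeredBernoulliCGF_le_of_le_log h0 hμ ht
  have hL : 0 < L := log_one_div_sub_one_pos h0 hμ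
  have hgL : (1 / 2 - μ) / L * L = 1 / 2 - μ := div_mul_cancel₀ _ hL.ne'
  have hreflect := centeredBernoulliCGF_two_mul_sub h0 (by linarith) (2 * L - t)
  rw [sub_sub_cancel] at hreflect
  have hle := centeredBernoulliCGF_le_of_le_log h0 hμ (show 2 * L - t ≤ L by linarith)
  have hsymm : (2 * L - t) ^ 2 / 2 * ((1 / 2 - μ) / L) + (1 - 2 * μ) * (L - (2 * L - t))
      = t ^ 2 / 2 * ((1 / 2 - μ) / L) := by
    linear_combination 2 * (L - t) * hgL
  linarith

lemma centeredBernoulliCGF_le (h0 : 0 < μ) (h1 : μ < 1) (hμ : μ ≠ 1 / 2) (t : ℝ) :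
    centeredBernoulliCGF μ t ≤ t ^ 2 / 2 * ((1 / 2 - μ) / log (1 / μ - 1)) := by
  rcases hμ.lt_or_gt with hμ | hμ
  · exact centeredBernoulliCGF_le_of_lt_half h0 hμ t
  have hlog_flip : log (1 / (1 - μ) - 1) = -log (1 / μ - 1) := by
    rw [← log_inv]
    congr 1
    field_simp [(sub_pos.2 h1).ne']
    ring
  have := centeredBernoulliCGF_le_of_lt_half (μ := 1 - μ) (by linarith) (by linarith) (-t)
  rw [centeredBernoulliCGF_one_sub_neg h0.le h1.le, hlog_flip] at this
  convert this using 2 <;> ring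

end

/-- Sub-Gaussianity of Bernoulli random variables (Kearns–Saul inequality):
the moment generating function of a centered Bernoulli random variable with
parameter `μ ≠ 1/2` is bounded by `exp(λ²/2 · g(μ))` with
`g(μ) = (1/2 − μ)/log(1/μ − 1)`. -/
theorem kearns_saul (μ : ℝ) (hμ0 : 0 < μ) (hμ1 : μ < 1) (hμ : μ ≠ 1/2)
    (lam : ℝ) :
    μ * Real.exp (lam * (1 - μ)) + (1 - μ) * Real.exp (-lam * μ)
      ≤ Real.exp (lam ^ 2 / 2 * ((1/2 - μ) / Real.log (1/μ - 1))) := by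
  rw [← exp_centeredBernoulliCGF hμ0.le hμ1.le]
  exact exp_le_exp.2 (centeredBernoulliCGF_le hμ0 hμ1 hμ lam)
end

section
/- (One-sided concentration of Bernoulli empirical means via the Kearns–Saul bound.) Let X₁, …, X_n be i.i.d. Bernoulli random variables with mean μ ∈ (0,1), μ ≠ 1/2, on a probability space. Then for every δ ∈ (0,1): P( (1/n)·∑_{i=1}^n X_i − μ ≥ √(2·g̲(μ)·log(1/δ)/n) ) ≤ δ, and P( μ − (1/n)·∑_{i=1}^n X_i ≥ √(2·g(μ)·log(1/δ)/n) ) ≤ δ. -/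
/-!
With `θ = artanh (1 - 2μ)`, the moment generating function of a centered Bernoulli(μ) variable
factors as `E exp (t (X - μ)) = exp ((1/2 - μ) t) · cosh (t/2 - θ) / cosh θ`. The Kearns–Saul
bound is then the concavity of `s ↦ log cosh √s`, taken at its tangent at `s = θ²`, which holds
because `tanh y / y` decreases on `(0, ∞)`. For `μ ≥ 1/2` and `t ≥ 0` the better constant
`μ (1 - μ) = 1 / (4 cosh² θ)` comes instead from the concavity of `tanh` on `[0, ∞)`. Both tails
follow by the Chernoff bound for the sum of the independent centered variables.
-/

open MeasureTheory ProbabilityTheory Real Set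

namespace Real

theorem hasDerivAt_tanh (x : ℝ) : HasDerivAt tanh (1 / cosh x ^ 2) x := by
  have h := (hasDerivAt_sinh x).div (hasDerivAt_cosh x) (cosh_pos x).ne'
  rw [show tanh = fun y => sinh y / cosh y from funext tanh_eq_sinh_div_cosh]
  refine h.congr_deriv ?_
  rw [← sq, ← sq, cosh_sq]
  ring

theorem hasDerivAt_log_cosh (x : ℝ) : HasDerivAt (fun y => log (cosh y)) (tanh x) x := by
  rw [tanh_eq_sinh_div_cosh]
  exact (hasDerivAt_cosh x).log (cosh_pos x).ne'

theorem antitoneOn_tanh_div_self : AntitoneOn (fun y => tanh y / y) (Ioi 0) := by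
  have hderiv (y : ℝ) (hy : y ∈ Ioi 0) : HasDerivAt (fun y => tanh y / y)
      ((1 / cosh y ^ 2 * y - tanh y * 1) / y ^ 2) y :=
    (hasDerivAt_tanh y).div (hasDerivAt_id y) (ne_of_gt hy)
  refine antitoneOn_of_hasDerivWithinAt_nonpos (convex_Ioi 0) (HasDerivAt.continuousOn hderiv)
    (fun y hy => (hderiv y (interior_subset hy)).hasDerivWithinAt) fun y hy => ?_
  rw [interior_Ioi, mem_Ioi] at hy
  have hc := cosh_pos y
  have hy2 : y ≤ sinh y * cosh y := by
    have := self_le_sinh_iff.2 (by linarith : 0 ≤ 2 * y)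
    rw [sinh_two_mul] at this; linarith
  apply div_nonpos_of_nonpos_of_nonneg _ (sq_nonneg _)
  rw [tanh_eq_sinh_div_cosh, sub_nonpos, div_mul_eq_mul_div, one_mul, mul_one,
    div_le_div_iff₀ (by positivity) hc]
  nlinarith

theorem log_cosh_le_of_pos {a y : ℝ} (ha : 0 < a) (hy : 0 ≤ y) :
    log (cosh y) ≤ log (cosh a) + tanh a / (2 * a) * (y ^ 2 - a ^ 2) := by
  set k := tanh a / a
  have hderiv (x : ℝ) : HasDerivAt (fun x => log (cosh x) - k / 2 * x ^ 2) (tanh x - k * x) x := by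
    refine ((hasDerivAt_log_cosh x).sub ((hasDerivAt_pow 2 x).const_mul (k / 2))).congr_deriv ?_
    push_cast; ring
  have hcont := HasDerivAt.continuousOn (s := univ) fun x _ => hderiv x
  have hsign (x : ℝ) (hx : 0 < x) : tanh x - k * x = x * (tanh x / x - k) := by
    field_simp
  suffices log (cosh y) - k / 2 * y ^ 2 ≤ log (cosh a) - k / 2 * a ^ 2 by
    rw [div_mul_eq_div_div_swap]; linarith
  rcases le_total y a with hya | hay
  · refine monotoneOn_of_hasDerivWithinAt_nonneg (convex_Icc 0 a) (hcont.mono (subset_univ _))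
      (fun x _ => (hderiv x).hasDerivWithinAt) (fun x hx => ?_) ⟨hy, hya⟩ ⟨ha.le, le_rfl⟩ hya
    rw [interior_Icc] at hx
    rw [hsign x hx.1]
    exact mul_nonneg hx.1.le (sub_nonneg.2 (antitoneOn_tanh_div_self hx.1 ha hx.2.le))
  · refine antitoneOn_of_hasDerivWithinAt_nonpos (convex_Ici a) (hcont.mono (subset_univ _))
      (fun x _ => (hderiv x).hasDerivWithinAt) (fun x hx => ?_) self_mem_Ici hay hay
    rw [interior_Ici] at hx
    have hx0 : 0 < x := ha.trans hx
    rw [hsign x hx0]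
    exact mul_nonpos_of_nonneg_of_nonpos hx0.le
      (sub_nonpos.2 (antitoneOn_tanh_div_self ha hx0 hx.le))

theorem log_cosh_le {a : ℝ} (ha : a ≠ 0) (y : ℝ) :
    log (cosh y) ≤ log (cosh a) + tanh a / (2 * a) * (y ^ 2 - a ^ 2) := by
  have hk : tanh |a| / (2 * |a|) = tanh a / (2 * a) := by
    rcases abs_choice a with h | h <;> rw [h]
    rw [tanh_neg]; ring
  have h := log_cosh_le_of_pos (abs_pos.2 ha) (abs_nonneg y)
  rwa [cosh_abs, cosh_abs, sq_abs, sq_abs, hk] at h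

theorem tanh_add_le {b s : ℝ} (hb : 0 ≤ b) (hs : 0 ≤ s) :
    tanh (b + s) ≤ tanh b + s / cosh b ^ 2 := by
  have hderiv (x : ℝ) : HasDerivAt (fun x => tanh b + x / cosh b ^ 2 - tanh (b + x))
      (1 / cosh b ^ 2 - 1 / cosh (b + x) ^ 2) x := by
    refine (((hasDerivAt_id x).div_const _).const_add _ |>.sub
      (hasDerivAt_tanh (b + x)).comp_const_add).congr_deriv ?_
    simp
  have hderiv_nonneg (x : ℝ) (hx : x ∈ interior (Ici 0)) :
      0 ≤ 1 / cosh b ^ 2 - 1 / cosh (b + x) ^ 2 := by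
    rw [interior_Ici, mem_Ioi] at hx
    have hcosh : cosh b ≤ cosh (b + x) := by
      rw [cosh_le_cosh, abs_of_nonneg hb, abs_of_nonneg (by linarith)]; linarith
    rw [sub_nonneg]
    gcongr
  have h := monotoneOn_of_hasDerivWithinAt_nonneg (convex_Ici 0)
    (HasDerivAt.continuousOn fun x _ => hderiv x) (fun x _ => (hderiv x).hasDerivWithinAt)
    hderiv_nonneg self_mem_Ici hs hs
  simpa using h

theorem log_cosh_add_le {b s : ℝ} (hb : 0 ≤ b) (hs : 0 ≤ s) :
    log (cosh (b + s)) ≤ log (cosh b) + tanh b * s + s ^ 2 / (2 * cosh b ^ 2) := by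
  have hderiv (x : ℝ) : HasDerivAt
      (fun x => log (cosh b) + tanh b * x + x ^ 2 / (2 * cosh b ^ 2) - log (cosh (b + x)))
      (tanh b + x / cosh b ^ 2 - tanh (b + x)) x := by
    refine ((((hasDerivAt_id x).const_mul _).const_add _).add
      ((hasDerivAt_pow 2 x).div_const _) |>.sub
      (hasDerivAt_log_cosh (b + x)).comp_const_add).congr_deriv ?_
    field_simp
    ring
  have h := monotoneOn_of_hasDerivWithinAt_nonneg (convex_Ici 0)
    (HasDerivAt.continuousOn fun x _ => hderiv x) (fun x _ => (hderiv x).hasDerivWithinAt)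
    (fun x hx => sub_nonneg.2 (tanh_add_le hb (interior_subset hx))) self_mem_Ici hs hs
  norm_num at h
  linarith

end Real

noncomputable def centeredBernoulliMGF (μ t : ℝ) : ℝ :=
  (1 - μ) * exp (-μ * t) + μ * exp ((1 - μ) * t)

noncomputable def kearnsSaulConst (μ : ℝ) : ℝ := (1 / 2 - μ) / log (1 / μ - 1)

theorem centeredBernoulliMGF_eq {μ θ : ℝ} (hθ : tanh θ = 1 - 2 * μ) (t : ℝ) :
    centeredBernoulliMGF μ t = exp ((1 / 2 - μ) * t + log (cosh (t / 2 - θ)) - log (cosh θ)) := by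
  have hc := cosh_pos θ
  have hsinh : sinh θ = (1 - 2 * μ) * cosh θ := by
    rw [← hθ, tanh_eq_sinh_div_cosh, div_mul_cancel₀ _ hc.ne']
  rw [exp_sub, exp_add, exp_log (cosh_pos _), exp_log hc, cosh_sub, hsinh, cosh_eq, sinh_eq,
    centeredBernoulliMGF, show -μ * t = (1 / 2 - μ) * t + -(t / 2) by ring,
    show (1 - μ) * t = (1 / 2 - μ) * t + t / 2 by ring, exp_add, exp_add]
  field_simp
  ring

theorem log_one_div_sub_one_eq_two_mul_artanh {μ : ℝ} (h0 : 0 < μ) (h1 : μ < 1) :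
    log (1 / μ - 1) = 2 * artanh (1 - 2 * μ) := by
  rw [artanh_eq_half_log ⟨by linarith, by linarith⟩]
  field_simp
  ring_nf

theorem centeredBernoulliMGF_le_kearnsSaul {μ : ℝ} (h0 : 0 < μ) (h1 : μ < 1) (hμ : μ ≠ 1 / 2)
    (t : ℝ) : centeredBernoulliMGF μ t ≤ exp (kearnsSaulConst μ * t ^ 2 / 2) := by
  have hθ : tanh (artanh (1 - 2 * μ)) = 1 - 2 * μ := tanh_artanh ⟨by linarith, by linarith⟩
  have hlog := log_one_div_sub_one_eq_two_mul_artanh h0 h1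
  set θ := artanh (1 - 2 * μ)
  have hθ0 : θ ≠ 0 := by
    intro h; rw [h, tanh_zero] at hθ; exact hμ (by linarith)
  rw [centeredBernoulliMGF_eq hθ, exp_le_exp]
  calc (1 / 2 - μ) * t + log (cosh (t / 2 - θ)) - log (cosh θ)
      ≤ (1 / 2 - μ) * t + tanh θ / (2 * θ) * ((t / 2 - θ) ^ 2 - θ ^ 2) := by
        linarith [log_cosh_le hθ0 (t / 2 - θ)]
    _ = kearnsSaulConst μ * t ^ 2 / 2 := by
        rw [kearnsSaulConst, hlog, hθ]
        field_simp
        ring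

theorem centeredBernoulliMGF_le_of_half_le {μ t : ℝ} (hμ : 1 / 2 ≤ μ) (h1 : μ < 1)
    (ht : 0 ≤ t) :
    centeredBernoulliMGF μ t ≤ exp (μ * (1 - μ) * t ^ 2 / 2) := by
  set θ := artanh (1 - 2 * μ)
  have hθ : tanh θ = 1 - 2 * μ := tanh_artanh ⟨by linarith, by linarith⟩
  have hθ0 : θ ≤ 0 := artanh_nonpos (by linarith)
  have hcosh : 1 / cosh θ ^ 2 = 4 * μ * (1 - μ) := by
    have hc := cosh_pos θ
    rw [show 4 * μ * (1 - μ) = 1 - (1 - 2 * μ) ^ 2 by ring, ← hθ, tanh_eq_sinh_div_cosh]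
    field_simp
    rw [cosh_sq]
    ring
  rw [centeredBernoulliMGF_eq hθ, exp_le_exp]
  have h := log_cosh_add_le (neg_nonneg.2 hθ0) (by linarith : 0 ≤ t / 2)
  rw [cosh_neg, tanh_neg, hθ, neg_add_eq_sub] at h
  calc (1 / 2 - μ) * t + log (cosh (t / 2 - θ)) - log (cosh θ)
      ≤ (1 / 2 - μ) * t + -(1 - 2 * μ) * (t / 2) + (t / 2) ^ 2 / (2 * cosh θ ^ 2) := by linarith
    _ = (1 / 2 - μ) * t + -(1 - 2 * μ) * (t / 2) + t ^ 2 / 8 * (1 / cosh θ ^ 2) := by ring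
    _ = μ * (1 - μ) * t ^ 2 / 2 := by rw [hcosh]; ring

section ZeroOne

variable {Ω : Type*} [MeasurableSpace Ω] {P : Measure Ω} {X : Ω → ℝ}

theorem comp_ae_eq_indicator_of_ae_zero_or_one (hvals : ∀ᵐ ω ∂P, X ω = 0 ∨ X ω = 1)
    (f : ℝ → ℝ) :
    (fun ω => f (X ω)) =ᵐ[P] fun ω => f 0 + (f 1 - f 0) * {ω | X ω = 1}.indicator 1 ω := by
  filter_upwards [hvals] with ω hω
  rcases hω with h | h <;> simp [h]

theorem integrable_comp_of_ae_zero_or_one [IsFiniteMeasure P] (hX : Measurable X)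
    (hvals : ∀ᵐ ω ∂P, X ω = 0 ∨ X ω = 1) (f : ℝ → ℝ) : Integrable (fun ω => f (X ω)) P :=
  ((integrable_const _).add (((integrable_const 1).indicator
    (hX (measurableSet_singleton 1))).const_mul _)).congr
    (comp_ae_eq_indicator_of_ae_zero_or_one hvals f).symm

theorem integral_comp_of_ae_zero_or_one [IsProbabilityMeasure P] (hX : Measurable X)
    (hvals : ∀ᵐ ω ∂P, X ω = 0 ∨ X ω = 1) {μ : ℝ} (hμ : 0 ≤ μ)
    (hbern : P {ω | X ω = 1} = ENNReal.ofReal μ) (f : ℝ → ℝ) :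
    ∫ ω, f (X ω) ∂P = (1 - μ) * f 0 + μ * f 1 := by
  have hA : MeasurableSet {ω | X ω = 1} := hX (measurableSet_singleton 1)
  rw [integral_congr_ae (comp_ae_eq_indicator_of_ae_zero_or_one hvals f),
    integral_add (integrable_const _) (((integrable_const 1).indicator hA).const_mul _),
    integral_const_mul, integral_indicator_one hA, measureReal_def, hbern,
    ENNReal.toReal_ofReal hμ]
  simp only [integral_const, probReal_univ, smul_eq_mul, one_mul]
  ring

theorem mgf_sub_const_of_ae_zero_or_one [IsProbabilityMeasure P] (hX : Measurable X)
    (hvals : ∀ᵐ ω ∂P, X ω = 0 ∨ X ω = 1) {μ : ℝ} (hμ : 0 ≤ μ)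
    (hbern : P {ω | X ω = 1} = ENNReal.ofReal μ) (t : ℝ) :
    mgf (fun ω => X ω - μ) P t = centeredBernoulliMGF μ t := by
  rw [mgf, integral_comp_of_ae_zero_or_one hX hvals hμ hbern fun x => exp (t * (x - μ)),
    centeredBernoulliMGF]
  ring_nf

theorem mgf_const_sub_of_ae_zero_or_one [IsProbabilityMeasure P] (hX : Measurable X)
    (hvals : ∀ᵐ ω ∂P, X ω = 0 ∨ X ω = 1) {μ : ℝ} (hμ : 0 ≤ μ)
    (hbern : P {ω | X ω = 1} = ENNReal.ofReal μ) (t : ℝ) :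
    mgf (fun ω => μ - X ω) P t = centeredBernoulliMGF μ (-t) := by
  rw [mgf, integral_comp_of_ae_zero_or_one hX hvals hμ hbern fun x => exp (t * (μ - x)),
    centeredBernoulliMGF]
  ring_nf

end ZeroOne

section Chernoff

variable {Ω : Type*} [MeasurableSpace Ω] {P : Measure Ω}

theorem measureReal_ge_le_of_mgf_le [IsFiniteMeasure P] {X : Ω → ℝ} {c ε : ℝ} (hc : 0 < c)
    (hε : 0 ≤ ε) (hint : ∀ t, 0 ≤ t → Integrable (fun ω => exp (t * X ω)) P)
    (hmgf : ∀ t, 0 ≤ t → mgf X P t ≤ exp (c * t ^ 2 / 2)) :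
    P.real {ω | ε ≤ X ω} ≤ exp (-ε ^ 2 / (2 * c)) := by
  have ht : 0 ≤ ε / c := div_nonneg hε hc.le
  calc P.real {ω | ε ≤ X ω}
      ≤ exp (-(ε / c) * ε) * mgf X P (ε / c) := measure_ge_le_exp_mul_mgf ε ht (hint _ ht)
    _ ≤ exp (-(ε / c) * ε) * exp (c * (ε / c) ^ 2 / 2) := by gcongr; exact hmgf _ ht
    _ = exp (-ε ^ 2 / (2 * c)) := by rw [← exp_add]; congr 1; field_simp; ring

theorem mgf_sum_le_of_iIndepFun {ι : Type*} {Y : ι → Ω → ℝ} (hindep : iIndepFun Y P)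
    (hmeas : ∀ i, Measurable (Y i)) {c t : ℝ} (hmgf : ∀ i, mgf (Y i) P t ≤ exp (c * t ^ 2 / 2))
    (s : Finset ι) : mgf (∑ i ∈ s, Y i) P t ≤ exp (s.card * c * t ^ 2 / 2) := by
  rw [hindep.mgf_sum hmeas]
  calc ∏ i ∈ s, mgf (Y i) P t ≤ ∏ _i ∈ s, exp (c * t ^ 2 / 2) :=
        Finset.prod_le_prod (fun _ _ => mgf_nonneg) fun i _ => hmgf i
    _ = exp (s.card * c * t ^ 2 / 2) := by
        rw [Finset.prod_const, ← exp_nat_mul]; ring_nf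

theorem measure_mean_ge_le_of_mgf_le [IsProbabilityMeasure P] {n : ℕ} (hn : 0 < n)
    {Y : Fin n → Ω → ℝ} (hindep : iIndepFun Y P) (hmeas : ∀ i, Measurable (Y i))
    (hint : ∀ i t, 0 ≤ t → Integrable (fun ω => exp (t * Y i ω)) P) {c : ℝ} (hc : 0 < c)
    (hmgf : ∀ i t, 0 ≤ t → mgf (Y i) P t ≤ exp (c * t ^ 2 / 2)) {δ : ℝ} (hδ0 : 0 < δ)
    (hδ1 : δ ≤ 1) :
    P {ω | √(2 * c * log (1 / δ) / n) ≤ (1 / n : ℝ) * ∑ i, Y i ω} ≤ ENNReal.ofReal δ := by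
  have hn' : (0 : ℝ) < n := Nat.cast_pos.2 hn
  have hlog : 0 ≤ log (1 / δ) := log_nonneg (by rw [le_div_iff₀ hδ0]; linarith)
  set r := √(2 * c * log (1 / δ) / n)
  have hr : r ^ 2 = 2 * c * log (1 / δ) / n := sq_sqrt (by positivity)
  have hevent : {ω | r ≤ (1 / n : ℝ) * ∑ i, Y i ω} = {ω | n * r ≤ (∑ i, Y i) ω} := by
    ext ω
    rw [mem_ofPred_eq, mem_ofPred_eq, Finset.sum_apply, one_div_mul_eq_div, le_div_iff₀ hn',
      mul_comm]
  have hbound := measureReal_ge_le_of_mgf_le (X := ∑ i, Y i) (mul_pos hn' hc)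
    (by positivity : 0 ≤ n * r)
    (fun t ht => by simpa using hindep.integrable_exp_mul_sum hmeas fun i _ => hint i t ht)
    (fun t ht => by simpa using mgf_sum_le_of_iIndepFun hindep hmeas (fun i => hmgf i t ht) .univ)
  rw [mul_pow, hr, show -(n ^ 2 * (2 * c * log (1 / δ) / n)) / (2 * (n * c)) = -log (1 / δ) by
    field_simp, one_div, log_inv, neg_neg, exp_log hδ0] at hbound
  rw [hevent, ENNReal.le_ofReal_iff_toReal_le (measure_ne_top P _) hδ0.le]
  exact hbound

end Chernoff

theorem kearnsSaulConst_pos {μ : ℝ} (h0 : 0 < μ) (h1 : μ < 1) (hμ : μ ≠ 1 / 2) :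
    0 < kearnsSaulConst μ := by
  rcases hμ.lt_or_gt with h | h
  · exact div_pos (by linarith) (log_pos (by rw [lt_sub_iff_add_lt, lt_div_iff₀ h0]; linarith))
  · refine div_pos_of_neg_of_neg (by linarith) (log_neg ?_ ?_)
    · rw [sub_pos, lt_div_iff₀ h0]; linarith
    · rw [sub_lt_iff_lt_add, div_lt_iff₀ h0]; linarith

theorem centeredBernoulliMGF_le_of_nonneg {μ t : ℝ} (h0 : 0 < μ) (h1 : μ < 1) (ht : 0 ≤ t) :
    centeredBernoulliMGF μ t ≤
      exp ((if μ < 1 / 2 then kearnsSaulConst μ else μ * (1 - μ)) * t ^ 2 / 2) := by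
  split_ifs with h
  · exact centeredBernoulliMGF_le_kearnsSaul h0 h1 h.ne t
  · exact centeredBernoulliMGF_le_of_half_le (not_lt.1 h) h1 ht

/-- One-sided concentration of Bernoulli empirical means via the Kearns–Saul
bound: with `g(μ) = (1/2 − μ)/log(1/μ − 1)` and `g̲(μ) = g(μ)` if `μ < 1/2`,
`g̲(μ) = μ(1−μ)` otherwise, both the right tail (with `g̲`) and the left tail
(with `g`) of the empirical mean of `n` i.i.d. Bernoulli(μ) variables are
bounded by `δ` at level `√(2·(·)·log(1/δ)/n)`. -/
theorem bernoulli_one_sided_concentration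
    {Ω : Type*} [MeasurableSpace Ω] (P : Measure Ω) [IsProbabilityMeasure P]
    (n : ℕ) (hn : 0 < n)
    (μ : ℝ) (hμ0 : 0 < μ) (hμ1 : μ < 1) (hμ : μ ≠ 1/2)
    (X : Fin n → Ω → ℝ)
    (hmeas : ∀ i, Measurable (X i))
    (hindep : iIndepFun X P)
    (hvals : ∀ i, ∀ᵐ ω ∂P, X i ω = 0 ∨ X i ω = 1)
    (hbern : ∀ i, P {ω | X i ω = 1} = ENNReal.ofReal μ)
    (δ : ℝ) (hδ0 : 0 < δ) (hδ1 : δ < 1) :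
    P {ω | (1/n : ℝ) * ∑ i, X i ω - μ ≥
        Real.sqrt (2 * (if μ < 1/2 then (1/2 - μ) / Real.log (1/μ - 1)
          else μ * (1 - μ)) * Real.log (1/δ) / n)}
      ≤ ENNReal.ofReal δ ∧
    P {ω | μ - (1/n : ℝ) * ∑ i, X i ω ≥
        Real.sqrt (2 * ((1/2 - μ) / Real.log (1/μ - 1)) * Real.log (1/δ) / n)}
      ≤ ENNReal.ofReal δ := by
  have hint (i : Fin n) (f : ℝ → ℝ) := integrable_comp_of_ae_zero_or_one (hmeas i) (hvals i) f
  have hmean (ω : Ω) : (1 / n : ℝ) * ∑ i, (X i ω - μ) = (1 / n) * ∑ i, X i ω - μ := by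
    rw [Finset.sum_sub_distrib, Finset.sum_const, Finset.card_univ, Fintype.card_fin,
      nsmul_eq_mul]
    field_simp
  have hmean_neg (ω : Ω) : (1 / n : ℝ) * ∑ i, (μ - X i ω) = μ - (1 / n) * ∑ i, X i ω := by
    rw [Finset.sum_sub_distrib, Finset.sum_const, Finset.card_univ, Fintype.card_fin,
      nsmul_eq_mul]
    field_simp
  constructor
  · have hc : 0 < if μ < 1 / 2 then kearnsSaulConst μ else μ * (1 - μ) := by
      split_ifs
      exacts [kearnsSaulConst_pos hμ0 hμ1 hμ, mul_pos hμ0 (by linarith)]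
    simpa only [hmean, ge_iff_le, kearnsSaulConst] using measure_mean_ge_le_of_mgf_le hn
      (Y := fun i ω => X i ω - μ) (hindep.comp _ fun _ => measurable_id.sub_const μ)
      (fun i => (hmeas i).sub_const μ) (fun i t _ => hint i fun x => exp (t * (x - μ))) hc
      (fun i t ht => (mgf_sub_const_of_ae_zero_or_one (hmeas i) (hvals i) hμ0.le (hbern i) t
        ).trans_le (centeredBernoulliMGF_le_of_nonneg hμ0 hμ1 ht))
      hδ0 hδ1.le
  · simpa only [hmean_neg, ge_iff_le, kearnsSaulConst] using measure_mean_ge_le_of_mgf_le hn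
      (Y := fun i ω => μ - X i ω) (hindep.comp _ fun _ => measurable_const.sub measurable_id)
      (fun i => (hmeas i).const_sub μ) (fun i t _ => hint i fun x => exp (t * (μ - x)))
      (kearnsSaulConst_pos hμ0 hμ1 hμ)
      (fun i t _ => by
        rw [mgf_const_sub_of_ae_zero_or_one (hmeas i) (hvals i) hμ0.le (hbern i), ← neg_sq t]
        exact centeredBernoulliMGF_le_kearnsSaul hμ0 hμ1 hμ (-t))
      hδ0 hδ1.le
end

section
/- (Chernoff bound for Bernoulli empirical means in Kullback–Leibler form.) Let X₁, …, X_n be i.i.d. Bernoulli random variables with mean μ ∈ (0,1), and let ε ≥ 0 with μ + ε ≤ 1. Then P( (1/n)·∑_{i=1}^n X_i − μ ≥ ε ) ≤ exp(−n·KL(μ+ε, μ)). -/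
/-!
A Bernoulli variable has moment generating function `p eᵗ + 1 - p`, so by independence and
Markov's inequality applied to `exp (t ∑ Xᵢ)`, the probability that `n` of them sum to at least
`n q` is at most `(e^{-tq} (p eᵗ + 1 - p))ⁿ` for every `t ≥ 0`. For `q < 1` the factor is
minimised at `eᵗ = q (1 - p) / ((1 - q) p)`, where it equals `exp (-KL(q, p))`; for `q = 1` it
tends to `p = exp (-KL(1, p))` as `t → ∞`.
-/

open MeasureTheory ProbabilityTheory Real Filter Topology

noncomputable def klBernoulli (u v : ℝ) : ℝ :=
  u * log (u / v) + (1 - u) * log ((1 - u) / (1 - v))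

noncomputable def bernoulliChernoffFactor (p q t : ℝ) : ℝ :=
  exp (-(t * q)) * (p * exp t + (1 - p))

section BernoulliMGF

variable {Ω : Type*} [MeasurableSpace Ω] {P : Measure Ω} {X : Ω → ℝ}

theorem exp_mul_ae_eq_indicator_of_ae_zero_or_one (hX : ∀ᵐ ω ∂P, X ω = 0 ∨ X ω = 1) (t : ℝ) :
    (fun ω => exp (t * X ω)) =ᵐ[P]
      fun ω => {ω | X ω = 1}.indicator (fun _ => exp t - 1) ω + 1 := by
  filter_upwards [hX] with ω hω
  rcases hω with h | h <;> simp [h]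

theorem integrable_exp_mul_of_ae_zero_or_one [IsFiniteMeasure P] (hXm : Measurable X)
    (hX : ∀ᵐ ω ∂P, X ω = 0 ∨ X ω = 1) (t : ℝ) :
    Integrable (fun ω => exp (t * X ω)) P :=
  (((integrable_const _).indicator (measurableSet_eq_fun hXm measurable_const)).add
    (integrable_const 1)).congr (exp_mul_ae_eq_indicator_of_ae_zero_or_one hX t).symm

theorem mgf_of_ae_zero_or_one [IsProbabilityMeasure P] {p : ℝ} (hXm : Measurable X)
    (hX : ∀ᵐ ω ∂P, X ω = 0 ∨ X ω = 1) (hp : 0 ≤ p) (hP : P {ω | X ω = 1} = ENNReal.ofReal p)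
    (t : ℝ) : mgf X P t = p * exp t + (1 - p) := by
  have hA : MeasurableSet {ω | X ω = 1} := measurableSet_eq_fun hXm measurable_const
  rw [mgf, integral_congr_ae (exp_mul_ae_eq_indicator_of_ae_zero_or_one hX t),
    integral_add ((integrable_const _).indicator hA) (integrable_const 1),
    integral_indicator_const _ hA, measureReal_def, hP, ENNReal.toReal_ofReal hp]
  simp only [smul_eq_mul, integral_const, probReal_univ, mul_one]
  ring

end BernoulliMGF

theorem measureReal_card_mul_le_sum_le_bernoulliChernoffFactor_pow
    {Ω ι : Type*} [MeasurableSpace Ω] {P : Measure Ω} [IsProbabilityMeasure P] [Fintype ι]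
    {X : ι → Ω → ℝ} {p : ℝ} (hXm : ∀ i, Measurable (X i)) (hindep : iIndepFun X P)
    (hX : ∀ i, ∀ᵐ ω ∂P, X i ω = 0 ∨ X i ω = 1) (hp : 0 ≤ p)
    (hP : ∀ i, P {ω | X i ω = 1} = ENNReal.ofReal p) (q : ℝ) {t : ℝ} (ht : 0 ≤ t) :
    P.real {ω | Fintype.card ι * q ≤ ∑ i, X i ω}
      ≤ bernoulliChernoffFactor p q t ^ Fintype.card ι := by
  have hmgf : mgf (∑ i, X i) P t = (p * exp t + (1 - p)) ^ Fintype.card ι := by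
    simp [hindep.mgf_sum hXm, mgf_of_ae_zero_or_one (hXm _) (hX _) hp (hP _)]
  have hint : Integrable (fun ω => exp (t * (∑ i, X i) ω)) P :=
    hindep.integrable_exp_mul_sum hXm fun i _ =>
      integrable_exp_mul_of_ae_zero_or_one (hXm i) (hX i) t
  have hmarkov := measure_ge_le_exp_mul_mgf (Fintype.card ι * q) ht hint
  simp only [Finset.sum_apply, hmgf] at hmarkov
  refine hmarkov.trans_eq ?_
  rw [bernoulliChernoffFactor, mul_pow, ← exp_nat_mul]
  ring_nf

theorem exists_bernoulliChernoffFactor_eq_exp_neg_klBernoulli {p q : ℝ} (hp : 0 < p)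
    (hpq : p ≤ q) (hq : q < 1) :
    ∃ t, 0 ≤ t ∧ bernoulliChernoffFactor p q t = exp (-klBernoulli q p) := by
  have hq0 : 0 < q := hp.trans_le hpq
  have hq1 : 0 < 1 - q := by linarith
  have hp1 : 0 < 1 - p := by linarith
  have harg : 0 < q * (1 - p) / ((1 - q) * p) := by positivity
  refine ⟨log (q * (1 - p) / ((1 - q) * p)),
    log_nonneg ((one_le_div (by positivity)).2 (by nlinarith)), ?_⟩
  have hmgf : p * exp (log (q * (1 - p) / ((1 - q) * p))) + (1 - p)
      = exp (log ((1 - p) / (1 - q))) := by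
    rw [exp_log harg, exp_log (by positivity)]
    field_simp
    ring
  rw [bernoulliChernoffFactor, hmgf, ← exp_add, klBernoulli,
    log_div (by positivity) (by positivity), log_mul hq0.ne' hp1.ne', log_mul hq1.ne' hp.ne',
    log_div hp1.ne' hq1.ne', log_div hq0.ne' hp.ne', log_div hq1.ne' hp1.ne']
  ring_nf

theorem tendsto_bernoulliChernoffFactor_one_atTop {p : ℝ} (hp : 0 < p) :
    Tendsto (bernoulliChernoffFactor p 1) atTop (𝓝 (exp (-klBernoulli 1 p))) := by
  have hfactor : bernoulliChernoffFactor p 1 = fun t => p + (1 - p) * exp (-t) := by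
    ext t
    rw [bernoulliChernoffFactor, mul_one, exp_neg]
    field_simp
  have hlimit : exp (-klBernoulli 1 p) = p + (1 - p) * 0 := by
    simp [klBernoulli, log_inv, exp_log hp]
  rw [hfactor, hlimit]
  exact tendsto_const_nhds.add (tendsto_const_nhds.mul tendsto_exp_neg_atTop_nhds_zero)

theorem le_exp_neg_klBernoulli_pow_of_forall_le {p q B : ℝ} {n : ℕ} (hp : 0 < p) (hpq : p ≤ q)
    (hq : q ≤ 1) (hB : ∀ t, 0 ≤ t → B ≤ bernoulliChernoffFactor p q t ^ n) :
    B ≤ exp (-klBernoulli q p) ^ n := by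
  rcases hq.lt_or_eq with hq | rfl
  · obtain ⟨t, ht, hfactor⟩ := exists_bernoulliChernoffFactor_eq_exp_neg_klBernoulli hp hpq hq
    exact hfactor ▸ hB t ht
  · exact ge_of_tendsto ((tendsto_bernoulliChernoffFactor_one_atTop hp).pow n)
      (eventually_ge_atTop 0 |>.mono hB)

theorem bernoulli_chernoff_kl_general
    {Ω : Type*} [MeasurableSpace Ω] (P : Measure Ω) [IsProbabilityMeasure P]
    (n : ℕ) (hn : 0 < n)
    (μ : ℝ) (hμ0 : 0 < μ)
    (X : Fin n → Ω → ℝ)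
    (hmeas : ∀ i, Measurable (X i))
    (hindep : iIndepFun X P)
    (hvals : ∀ i, ∀ᵐ ω ∂P, X i ω = 0 ∨ X i ω = 1)
    (hbern : ∀ i, P {ω | X i ω = 1} = ENNReal.ofReal μ)
    (ε : ℝ) (hε : 0 ≤ ε) (hμε : μ + ε ≤ 1) :
    P {ω | (1/n : ℝ) * ∑ i, X i ω - μ ≥ ε}
      ≤ ENNReal.ofReal (Real.exp (-(n : ℝ) *
          ((μ + ε) * Real.log ((μ + ε) / μ) +
            (1 - (μ + ε)) * Real.log ((1 - (μ + ε)) / (1 - μ))))) := by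
  have hsubset : {ω | (1/n : ℝ) * ∑ i, X i ω - μ ≥ ε} ⊆ {ω | n * (μ + ε) ≤ ∑ i, X i ω} :=
    fun ω hω => by
      have hn' : (0 : ℝ) < n := by exact_mod_cast hn
      rw [Set.mem_ofPred_eq, ge_iff_le, le_sub_iff_add_le', one_div, inv_mul_eq_div,
        le_div_iff₀ hn'] at hω
      exact (mul_comm _ _).trans_le hω
  have hchernoff : P.real {ω | n * (μ + ε) ≤ ∑ i, X i ω} ≤ exp (-klBernoulli (μ + ε) μ) ^ n :=
    le_exp_neg_klBernoulli_pow_of_forall_le hμ0 (by linarith) hμε fun _ ht => by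
      simpa only [Fintype.card_fin] using
        measureReal_card_mul_le_sum_le_bernoulliChernoffFactor_pow hmeas hindep hvals hμ0.le
          hbern (μ + ε) ht
  calc P {ω | (1/n : ℝ) * ∑ i, X i ω - μ ≥ ε}
      ≤ P {ω | n * (μ + ε) ≤ ∑ i, X i ω} := measure_mono hsubset
    _ = ENNReal.ofReal (P.real {ω | n * (μ + ε) ≤ ∑ i, X i ω}) :=
      (ENNReal.ofReal_toReal (measure_ne_top _ _)).symm
    _ ≤ _ := by
      rw [neg_mul, ← mul_neg, exp_nat_mul]
      exact ENNReal.ofReal_le_ofReal hchernoff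

/-- Chernoff bound for Bernoulli empirical means in Kullback–Leibler form:
`P((1/n)∑ Xᵢ − μ ≥ ε) ≤ exp(−n·KL(μ+ε, μ))`, where
`KL(u,v) = u log(u/v) + (1−u) log((1−u)/(1−v))`. -/
theorem bernoulli_chernoff_kl
    {Ω : Type*} [MeasurableSpace Ω] (P : Measure Ω) [IsProbabilityMeasure P]
    (n : ℕ) (hn : 0 < n)
    (μ : ℝ) (hμ0 : 0 < μ) (hμ1 : μ < 1)
    (X : Fin n → Ω → ℝ)
    (hmeas : ∀ i, Measurable (X i))
    (hindep : iIndepFun X P)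
    (hvals : ∀ i, ∀ᵐ ω ∂P, X i ω = 0 ∨ X i ω = 1)
    (hbern : ∀ i, P {ω | X i ω = 1} = ENNReal.ofReal μ)
    (ε : ℝ) (hε : 0 ≤ ε) (hμε : μ + ε ≤ 1) :
    P {ω | (1/n : ℝ) * ∑ i, X i ω - μ ≥ ε}
      ≤ ENNReal.ofReal (Real.exp (-(n : ℝ) *
          ((μ + ε) * Real.log ((μ + ε) / μ) +
            (1 - (μ + ε)) * Real.log ((1 - (μ + ε)) / (1 - μ))))) :=
  bernoulli_chernoff_kl_general P n hn μ hμ0 X hmeas hindep hvals hbern ε hε hμε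
end

section
/- (Gaussian-mixture integral lower bound used in the method-of-mixtures proof of the time-uniform Bernoulli concentration.) For all real numbers c > 0, m > 0 and s ≥ 0: √(2c/π) · ∫_0^∞ exp( λ·s − λ²·c·m/2 ) dλ ≥ exp( s²/(2·c·m) ) / √m. -/
open MeasureTheory

/-- Gaussian-mixture integral lower bound used in the method-of-mixtures
proof of the time-uniform Bernoulli concentration: for `c > 0`, `m > 0` and
`s ≥ 0`,
`√(2c/π) · ∫_0^∞ exp(λs − λ²cm/2) dλ ≥ exp(s²/(2cm)) / √m`. -/
theorem gaussian_mixture_integral_lower_bound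
    (c m s : ℝ) (hc : 0 < c) (hm : 0 < m) (hs : 0 ≤ s) :
    Real.sqrt (2 * c / Real.pi) *
        ∫ lam in Set.Ici (0:ℝ), Real.exp (lam * s - lam ^ 2 * c * m / 2)
      ≥ Real.exp (s ^ 2 / (2 * c * m)) / Real.sqrt m := by
  have hcm : 0 < c * m := mul_pos hc hm
  set a : ℝ := c * m / 2 with ha
  have ha0 : 0 < a := by positivity
  set μ : ℝ := s / (c * m) with hμ
  have hμ0 : 0 ≤ μ := div_nonneg hs hcm.le
  set K : ℝ := s ^ 2 / (2 * c * m) with hK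
  have hpt : ∀ x : ℝ, x * s - x ^ 2 * c * m / 2 = K + -a * (x - μ) ^ 2 := by
    intro x
    rw [hK, ha, hμ]
    field_simp
    ring
  have hInt : Integrable (fun x : ℝ => Real.exp (-a * (x - μ) ^ 2)) := by
    exact (integrable_exp_neg_mul_sq ha0).comp_sub_right μ
  -- Step 1: rewrite the integral
  have h1 : (∫ lam in Set.Ici (0:ℝ), Real.exp (lam * s - lam ^ 2 * c * m / 2))
      = Real.exp K * ∫ x in Set.Ici (0:ℝ), Real.exp (-a * (x - μ) ^ 2) := by
    rw [← integral_const_mul]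
    refine setIntegral_congr_fun measurableSet_Ici fun x _ => ?_
    rw [hpt x, Real.exp_add]
  -- Step 2: shift invariance
  have h3 : (∫ x in Set.Ici μ, Real.exp (-a * (x - μ) ^ 2))
      = ∫ x in Set.Ici (0:ℝ), Real.exp (-a * x ^ 2) := by
    rw [← integral_indicator measurableSet_Ici, ← integral_indicator measurableSet_Ici,
      ← integral_add_right_eq_self
        (fun x => (Set.Ici μ).indicator (fun y => Real.exp (-a * (y - μ) ^ 2)) x) μ]
    congr 1
    ext x
    by_cases hx : (0:ℝ) ≤ x
    · simp [Set.indicator_apply, Set.mem_Ici, hx, le_add_iff_nonneg_left]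
    · simp [Set.indicator_apply, Set.mem_Ici, hx, le_add_iff_nonneg_left]
  -- Step 3: monotonicity
  have h2 : (∫ x in Set.Ici (0:ℝ), Real.exp (-a * (x - μ) ^ 2))
      ≥ ∫ x in Set.Ici μ, Real.exp (-a * (x - μ) ^ 2) := by
    refine setIntegral_mono_set hInt.integrableOn ?_ ?_
    · exact Filter.Eventually.of_forall fun x => (Real.exp_pos _).le
    · exact (Set.Ici_subset_Ici.mpr hμ0).eventuallyLE
  -- Step 4: Gaussian value
  have h4 : (∫ x in Set.Ici (0:ℝ), Real.exp (-a * x ^ 2)) = Real.sqrt (Real.pi / a) / 2 := by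
    rw [integral_Ici_eq_integral_Ioi, integral_gaussian_Ioi]
  -- constant computation
  have hπ : 0 < Real.pi := Real.pi_pos
  have hconst : Real.sqrt (2 * c / Real.pi) * (Real.sqrt (Real.pi / a) / 2)
      = 1 / Real.sqrt m := by
    rw [mul_div_assoc', ← Real.sqrt_mul (by positivity)]
    have h5 : 2 * c / Real.pi * (Real.pi / a) = 4 / m := by
      rw [ha]; field_simp; ring
    have h6 : (4:ℝ) / m = (2 / Real.sqrt m) ^ 2 := by
      rw [div_pow, Real.sq_sqrt hm.le]; norm_num
    rw [h5, h6, Real.sqrt_sq (by positivity)]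
    rw [div_div, mul_comm, ← div_div]
    norm_num
  calc Real.sqrt (2 * c / Real.pi) *
        ∫ lam in Set.Ici (0:ℝ), Real.exp (lam * s - lam ^ 2 * c * m / 2)
      = Real.exp K * (Real.sqrt (2 * c / Real.pi) *
          ∫ x in Set.Ici (0:ℝ), Real.exp (-a * (x - μ) ^ 2)) := by rw [h1]; ring
    _ ≥ Real.exp K * (Real.sqrt (2 * c / Real.pi) * (Real.sqrt (Real.pi / a) / 2)) := by
        have hle : Real.sqrt (Real.pi / a) / 2
            ≤ ∫ x in Set.Ici (0:ℝ), Real.exp (-a * (x - μ) ^ 2) := by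
          rw [← h4, ← h3]; exact h2
        have hsq : (0:ℝ) ≤ Real.sqrt (2 * c / Real.pi) := Real.sqrt_nonneg _
        exact mul_le_mul_of_nonneg_left (mul_le_mul_of_nonneg_left hle hsq)
          (Real.exp_pos _).le
    _ = Real.exp K / Real.sqrt m := by rw [hconst]; ring
end
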